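/- Assume that for every k ∈ ℤ₊ the function φ is (k+1)-times differentiable on (α,β) and φ^k · ∂_t^{k+1} φ extends to a continuous function on [α,β]. Let η : [α,β] → ℝ be continuous and such that, for every k ∈ ℤ₊, η is k-times differentiable on (α,β) and φ^k · ∂_t^k η extends to a continuous function on [α,β]. Then η ∈ C_φ^{(∞)}. -/

import Mathlib

open Real Set Filter Topology

/-- The open interval `(α, β)` of real numbers, where `α β` are extended reals. -/
def EI (α β : EReal) : Set ℝ := {x : ℝ | α < (x : EReal) ∧ (x : EReal) < β}

/-- `u : ℝ → ℝ` (thought of as a function on `(α, β)`) extends to a continuous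
function on `[α, β] ⊆ EReal`. -/
def ContExt (α β : EReal) (u : ℝ → ℝ) : Prop :=
  ∃ g : EReal → ℝ, ContinuousOn g (Set.Icc α β) ∧
    ∀ x : ℝ, x ∈ EI α β → g (x : EReal) = u x

/-- The operator `X u := φ · u′`. -/
noncomputable def Xop (φ u : ℝ → ℝ) : ℝ → ℝ := fun x => φ x * deriv u x

/-- The iterates `X^k u`. -/
noncomputable def Xiter (φ : ℝ → ℝ) : ℕ → (ℝ → ℝ) → (ℝ → ℝ)
  | 0, u => u
  | n + 1, u => Xop φ (Xiter φ n u)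

/-- The space `C_φ^{(n)}`: inductively, `C_φ^{(0)}` consists of the functions having a
continuous extension to `[α, β]`, and `u ∈ C_φ^{(n+1)}` iff `u ∈ C_φ^{(n)}`, `X^n u` is
differentiable on `(α, β)`, and `X^{n+1} u` extends to a continuous function on `[α, β]`. -/
def CN (α β : EReal) (φ : ℝ → ℝ) : ℕ → Set (ℝ → ℝ)
  | 0 => {u | ContExt α β u}
  | n + 1 => {u | u ∈ CN α β φ n ∧
      (∀ x ∈ EI α β, DifferentiableAt ℝ (Xiter φ n u) x) ∧
      ContExt α β (Xiter φ (n + 1) u)}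

/-- The space `C_φ^{(∞)} := ⋂ₙ C_φ^{(n)}`. -/
def Cinf (α β : EReal) (φ : ℝ → ℝ) : Set (ℝ → ℝ) := ⋂ n : ℕ, CN α β φ n

/-- The spaces `C_φ^{(n)}` for `n ∈ ℤ₊ ∪ {∞}`. -/
def CNE (α β : EReal) (φ : ℝ → ℝ) (n : ℕ∞) : Set (ℝ → ℝ) :=
  WithTop.recTopCoe (Cinf α β φ) (fun k => CN α β φ k) n

/-!
By the Leibniz rule,
`φ^k ∂^k (φ u') = φ^(k+1) ∂^(k+1) u + ∑_{i<k} C(k,i+1) (φ^i ∂^(i+1) φ) (φ^(k-i) ∂^(k-i) u)`,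
so the class of functions `u`, smooth on `(α, β)` with every `φ^k ∂^k u` extending continuously
to `[α, β]`, is stable under `X`. It contains `η`, hence all `X^n η`.
-/

open scoped ContDiff

theorem contDiffOn_infty_of_differentiableAt_iteratedDeriv {𝕜 F : Type*}
    [NontriviallyNormedField 𝕜] [NormedAddCommGroup F] [NormedSpace 𝕜 F] {f : 𝕜 → F}
    {s : Set 𝕜} (hs : IsOpen s) (h : ∀ i, ∀ x ∈ s, DifferentiableAt 𝕜 (iteratedDeriv i f) x) :
    ContDiffOn 𝕜 ∞ f s :=
  contDiffOn_of_differentiableOn_deriv fun m _ x hx =>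
    ((h m x hx).congr_of_eventuallyEq ((iteratedDerivWithin_of_isOpen hs).eventuallyEq_of_mem
      (hs.mem_nhds hx))).differentiableWithinAt

theorem isOpen_EI (α β : EReal) : IsOpen (EI α β) :=
  isOpen_Ioo.preimage continuous_coe_real_ereal

namespace ContExt

variable {α β : EReal} {u v : ℝ → ℝ}

theorem congr (h : ContExt α β u) (he : EqOn v u (EI α β)) : ContExt α β v := by
  obtain ⟨g, hg, hgu⟩ := h
  exact ⟨g, hg, fun x hx => (hgu x hx).trans (he hx).symm⟩

theorem mul (hu : ContExt α β u) (hv : ContExt α β v) : ContExt α β (fun x => u x * v x) := by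
  obtain ⟨g, hg, hgu⟩ := hu
  obtain ⟨h, hh, hhv⟩ := hv
  exact ⟨fun e => g e * h e, hg.mul hh, fun x hx => congrArg₂ (· * ·) (hgu x hx) (hhv x hx)⟩

theorem add (hu : ContExt α β u) (hv : ContExt α β v) : ContExt α β (fun x => u x + v x) := by
  obtain ⟨g, hg, hgu⟩ := hu
  obtain ⟨h, hh, hhv⟩ := hv
  exact ⟨fun e => g e + h e, hg.add hh, fun x hx => congrArg₂ (· + ·) (hgu x hx) (hhv x hx)⟩

theorem const_mul (c : ℝ) (hu : ContExt α β u) : ContExt α β (fun x => c * u x) := by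
  obtain ⟨g, hg, hgu⟩ := hu
  exact ⟨fun e => c * g e, continuousOn_const.mul hg, fun x hx => congrArg (c * ·) (hgu x hx)⟩

theorem finset_sum {ι : Type*} {t : Finset ι} {F : ι → ℝ → ℝ} (h : ∀ j ∈ t, ContExt α β (F j)) :
    ContExt α β (fun x => ∑ j ∈ t, F j x) := by
  choose g hg hgF using h
  refine ⟨fun e => ∑ j ∈ t.attach, g j.1 j.2 e,
    continuousOn_finsetSum _ fun j _ => hg j.1 j.2, fun x hx => ?_⟩
  exact (Finset.sum_congr rfl fun j _ => hgF j.1 j.2 x hx).trans (Finset.sum_attach t (F · x))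

end ContExt

theorem pow_mul_iteratedDeriv_Xop {φ f : ℝ → ℝ} {s : Set ℝ} (hs : IsOpen s)
    (hφ : ContDiffOn ℝ ∞ φ s) (hf : ContDiffOn ℝ ∞ f s) {x : ℝ} (hx : x ∈ s) (k : ℕ) :
    φ x ^ k * iteratedDeriv k (Xop φ f) x =
      φ x ^ (k + 1) * iteratedDeriv (k + 1) f x +
        ∑ i ∈ Finset.range k, (k.choose (i + 1) : ℝ) *
          ((φ x ^ i * iteratedDeriv (i + 1) φ x) * (φ x ^ (k - i) * iteratedDeriv (k - i) f x)) := by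
  have hφx : ContDiffAt ℝ k φ x :=
    (hφ.contDiffAt (hs.mem_nhds hx)).of_le (by exact_mod_cast le_top)
  have hf'x : ContDiffAt ℝ k (deriv f) x :=
    ((hf.deriv_of_isOpen (m := ∞) hs (by simp)).contDiffAt (hs.mem_nhds hx)).of_le
      (by exact_mod_cast le_top)
  rw [show Xop φ f = fun y => φ y * deriv f y from rfl, iteratedDeriv_fun_mul hφx hf'x,
    Finset.sum_range_succ', mul_add, Finset.mul_sum, add_comm]
  congr 1
  · simp only [Nat.choose_zero_right, Nat.cast_one, iteratedDeriv_zero, Nat.sub_zero,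
      ← iteratedDeriv_succ', pow_succ]
    ring
  · refine Finset.sum_congr rfl fun i hi => ?_
    have hik : i < k := Finset.mem_range.mp hi
    rw [← iteratedDeriv_succ', show k - (i + 1) + 1 = k - i by omega,
      show φ x ^ k = φ x ^ i * φ x ^ (k - i) by rw [← pow_add]; congr 1; omega]
    ring

def WeightedSmooth (α β : EReal) (φ f : ℝ → ℝ) : Prop :=
  ContDiffOn ℝ ∞ f (EI α β) ∧ ∀ k : ℕ, ContExt α β (fun x => φ x ^ k * iteratedDeriv k f x)

namespace WeightedSmooth

variable {α β : EReal} {φ f : ℝ → ℝ}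

theorem contExt (hf : WeightedSmooth α β φ f) : ContExt α β f :=
  (hf.2 0).congr fun x _ => by simp

theorem Xop (hφ : ContDiffOn ℝ ∞ φ (EI α β))
    (hφe : ∀ k : ℕ, ContExt α β (fun x => φ x ^ k * iteratedDeriv (k + 1) φ x))
    (hf : WeightedSmooth α β φ f) : WeightedSmooth α β φ (Xop φ f) := by
  refine ⟨hφ.mul (hf.1.deriv_of_isOpen (isOpen_EI α β) (by simp)), fun k => ?_⟩
  refine ContExt.congr ?_ fun x hx => pow_mul_iteratedDeriv_Xop (isOpen_EI α β) hφ hf.1 hx k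
  exact (hf.2 (k + 1)).add <| ContExt.finset_sum fun i _ =>
    ((hφe i).mul (hf.2 (k - i))).const_mul _

theorem Xiter (hφ : ContDiffOn ℝ ∞ φ (EI α β))
    (hφe : ∀ k : ℕ, ContExt α β (fun x => φ x ^ k * iteratedDeriv (k + 1) φ x))
    (hf : WeightedSmooth α β φ f) (n : ℕ) : WeightedSmooth α β φ (Xiter φ n f) := by
  induction n with
  | zero => exact hf
  | succ n ih => exact ih.Xop hφ hφe

end WeightedSmooth

theorem mem_Cinf_of_Xiter {α β : EReal} {φ u : ℝ → ℝ} (hcont : ∀ n, ContExt α β (Xiter φ n u))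
    (hdiff : ∀ n, ∀ x ∈ EI α β, DifferentiableAt ℝ (Xiter φ n u) x) : u ∈ Cinf α β φ := by
  refine mem_iInter.mpr fun n => ?_
  induction n with
  | zero => exact hcont 0
  | succ n ih => exact ⟨ih, hdiff n, hcont (n + 1)⟩

theorem mem_Cinf_of_powers_general (α β : EReal) (φ : ℝ → ℝ)
    (hφ : ∀ k : ℕ,
      (∀ i < k + 1, ∀ x ∈ EI α β, DifferentiableAt ℝ (iteratedDeriv i φ) x) ∧
        ContExt α β (fun x => φ x ^ k * iteratedDeriv (k + 1) φ x))
    (η : ℝ → ℝ)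
    (hη : ∀ k : ℕ,
      (∀ i < k, ∀ x ∈ EI α β, DifferentiableAt ℝ (iteratedDeriv i η) x) ∧
        ContExt α β (fun x => φ x ^ k * iteratedDeriv k η x)) :
    η ∈ Cinf α β φ := by
  have hφs : ContDiffOn ℝ ∞ φ (EI α β) :=
    contDiffOn_infty_of_differentiableAt_iteratedDeriv (isOpen_EI α β)
      fun i => (hφ i).1 i i.lt_succ_self
  have hηs : WeightedSmooth α β φ η :=
    ⟨contDiffOn_infty_of_differentiableAt_iteratedDeriv (isOpen_EI α β)
      fun i => (hη (i + 1)).1 i i.lt_succ_self, fun k => (hη k).2⟩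
  have hXη := hηs.Xiter hφs fun k => (hφ k).2
  exact mem_Cinf_of_Xiter (fun n => (hXη n).contExt) fun n x hx =>
    ((hXη n).1.contDiffAt ((isOpen_EI α β).mem_nhds hx)).differentiableAt (by simp)

/-- assume that for every `k` the function `φ` is `(k+1)`-times
differentiable on `(α,β)` and `φ^k ∂_t^{k+1} φ` extends continuously to `[α,β]`.  If
`η : [α,β] → ℝ` is continuous and for every `k` it is `k`-times differentiable on
`(α,β)` with `φ^k ∂_t^k η` extending continuously to `[α,β]`, then `η ∈ C_φ^{(∞)}`. -/
theorem mem_Cinf_of_powers (α β : EReal) (hαβ : α < β) (φ : ℝ → ℝ)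
    (hφc : ContinuousOn φ (EI α β)) (hφpos : ∀ x ∈ EI α β, 0 < φ x)
    (hφ : ∀ k : ℕ,
      (∀ i < k + 1, ∀ x ∈ EI α β, DifferentiableAt ℝ (iteratedDeriv i φ) x) ∧
        ContExt α β (fun x => φ x ^ k * iteratedDeriv (k + 1) φ x))
    (η : ℝ → ℝ) (hηc : ContExt α β η)
    (hη : ∀ k : ℕ,
      (∀ i < k, ∀ x ∈ EI α β, DifferentiableAt ℝ (iteratedDeriv i η) x) ∧
        ContExt α β (fun x => φ x ^ k * iteratedDeriv k η x)) :
    η ∈ Cinf α β φ :=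
  mem_Cinf_of_powers_general α β φ hφ η hη
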